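/- arXiv:0901.3749 — 5 statements merged into one kernel-verified Lean document; each statement's English description precedes it below -/
import Mathlib

section
/- For a string function p : Σ* → ℝ and d ∈ ℕ, the following are equivalent: (i) dim p ≤ d; (ii) there exist vectors x, y ∈ ℝ^d and matrices T_a ∈ ℝ^{d×d} for all a ∈ Σ such that p(v = a_1…a_n) = yᵀ T_{a_n}···T_{a_1} x for all v ∈ Σ* (in particular p(□) = yᵀx). -/
open Matrix

/-- The column `p^w` of the Hankel matrix of `p`, as a function `v ↦ p(wv)`. -/
def hankelCol {A : Type*} (p : List A → ℝ) (w : List A) : List A → ℝ :=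
  fun v => p (w ++ v)

/-- The dimension of a string function: the rank of its Hankel matrix, i.e. the dimension
of the span of its columns `{p^w : w ∈ Σ*}` in `ℝ^{Σ*}`. -/
noncomputable def sfDim {A : Type*} (p : List A → ℝ) : Cardinal :=
  Module.rank ℝ ↥(Submodule.span ℝ (Set.range (hankelCol p)))

/-- For `v = a₁…aₙ`, the product `T_{aₙ} ⋯ T_{a₁}`. -/
def wordProd {A R : Type*} [Semiring R] {d : ℕ}
    (T : A → Matrix (Fin d) (Fin d) R) (v : List A) : Matrix (Fin d) (Fin d) R :=
  (v.reverse.map T).prod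

/-
A linear representation `(x, y, T)` shows that every column `p^w` is the image of `T_w x` under
the linear map `z ↦ (v ↦ yᵀ T_v z)` out of `ℝ^d`, so `dim p ≤ d`. Conversely, the span `V` of
the columns is stable under the shifts `f ↦ (v ↦ f (a v))` and contains `p = p^□`; since
`f (a₁…aₙ)` is the value at `□` of `f` shifted by `a₁, …, aₙ` in turn, embedding `V` as a
retract of `ℝ^d` turns the shifts into matrices `T_a` and evaluation at `□` into `yᵀ`.
-/

section WordProd

variable {A R : Type*} [Semiring R] {d : ℕ} (T : A → Matrix (Fin d) (Fin d) R)

lemma wordProd_cons (a : A) (v : List A) : wordProd T (a :: v) = wordProd T v * T a := by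
  simp [wordProd]

lemma wordProd_append (w v : List A) : wordProd T (w ++ v) = wordProd T v * wordProd T w := by
  simp [wordProd]

end WordProd

section Hankel

variable {A : Type*} (p : List A → ℝ)

lemma hankelCol_nil : hankelCol p [] = p := rfl

lemma funLeft_cons_hankelCol (a : A) (w : List A) :
    LinearMap.funLeft ℝ ℝ (List.cons a) (hankelCol p w) = hankelCol p (w ++ [a]) := by
  funext v
  simp [hankelCol]

lemma funLeft_cons_mem_span_hankelCol (a : A) {f : List A → ℝ}
    (hf : f ∈ Submodule.span ℝ (Set.range (hankelCol p))) :
    LinearMap.funLeft ℝ ℝ (List.cons a) f ∈ Submodule.span ℝ (Set.range (hankelCol p)) := by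
  have hle : Submodule.span ℝ (Set.range (hankelCol p)) ≤
      (Submodule.span ℝ (Set.range (hankelCol p))).comap (LinearMap.funLeft ℝ ℝ (List.cons a)) :=
    Submodule.span_le.2 <| by
      rintro _ ⟨w, rfl⟩
      exact Submodule.subset_span ⟨w ++ [a], (funLeft_cons_hankelCol p a w).symm⟩
  exact hle hf

lemma hankelCol_eq_of_wordProd_repr {d : ℕ} {x y : Fin d → ℝ}
    {T : A → Matrix (Fin d) (Fin d) ℝ} (hp : ∀ v, p v = y ⬝ᵥ wordProd T v *ᵥ x) (w : List A) :
    hankelCol p w = fun v => y ⬝ᵥ wordProd T v *ᵥ (wordProd T w *ᵥ x) := by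
  funext v
  rw [hankelCol, hp, wordProd_append, mulVec_mulVec]

lemma sfDim_le_of_wordProd_repr {d : ℕ} {x y : Fin d → ℝ}
    {T : A → Matrix (Fin d) (Fin d) ℝ} (hp : ∀ v, p v = y ⬝ᵥ wordProd T v *ᵥ x) :
    sfDim p ≤ d := by
  let φ : (Fin d → ℝ) →ₗ[ℝ] (List A → ℝ) :=
    LinearMap.pi fun v => dotProductBilin ℝ ℝ y ∘ₗ (wordProd T v).mulVecLin
  have hspan : Submodule.span ℝ (Set.range (hankelCol p)) ≤ LinearMap.range φ :=
    Submodule.span_le.2 <| by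
      rintro _ ⟨w, rfl⟩
      exact ⟨wordProd T w *ᵥ x, (hankelCol_eq_of_wordProd_repr p hp w).symm⟩
  have hrange : Module.rank ℝ (LinearMap.range φ) ≤ d := by
    simpa using lift_rank_range_le φ
  exact (Submodule.rank_mono hspan).trans hrange

end Hankel

theorem Submodule.exists_wordProd_repr_of_funLeft_cons_mem {A : Type*}
    {V : Submodule ℝ (List A → ℝ)} {d : ℕ}
    (hV : ∀ a, ∀ f ∈ V, LinearMap.funLeft ℝ ℝ (List.cons a) f ∈ V)
    (hd : Module.rank ℝ V ≤ d) :
    ∃ (ι : V →ₗ[ℝ] (Fin d → ℝ)) (y : Fin d → ℝ) (T : A → Matrix (Fin d) (Fin d) ℝ),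
      ∀ (f : V) (v : List A), (f : List A → ℝ) v = y ⬝ᵥ wordProd T v *ᵥ ι f := by
  obtain ⟨ι, hι⟩ := (lift_rank_le_iff_exists_linearMap (R := ℝ) (M := V) (M' := Fin d → ℝ)).1
    (by simpa using hd)
  obtain ⟨ρ, hρι⟩ := ι.exists_leftInverse_of_injective (LinearMap.ker_eq_bot.2 hι)
  have hρ : ∀ f, ρ (ι f) = f := LinearMap.ext_iff.1 hρι
  let shift a : V →ₗ[ℝ] V := (LinearMap.funLeft ℝ ℝ (List.cons a)).restrict (hV a)
  let T a := LinearMap.toMatrix' (ι ∘ₗ shift a ∘ₗ ρ)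
  let ev : (Fin d → ℝ) →ₗ[ℝ] ℝ := LinearMap.proj [] ∘ₗ V.subtype ∘ₗ ρ
  let y := (dotProductEquiv ℝ (Fin d)).symm ev
  have hT : ∀ a f, T a *ᵥ ι f = ι (shift a f) := by
    intro a f
    simp [T, hρ]
  have hy : ∀ f, y ⬝ᵥ ι f = (f : List A → ℝ) [] := by
    intro f
    have h := LinearMap.congr_fun ((dotProductEquiv ℝ (Fin d)).apply_symm_apply ev) (ι f)
    rw [dotProductEquiv_apply_apply] at h
    simpa [ev, hρ] using h
  refine ⟨ι, y, T, fun f v => ?_⟩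
  induction v generalizing f with
  | nil => simp [wordProd, hy]
  | cons a v ih =>
    rw [wordProd_cons, ← mulVec_mulVec, hT, ← ih]
    rfl

theorem stmt1_general {A : Type*} (p : List A → ℝ) (d : ℕ) :
    sfDim p ≤ (d : Cardinal) ↔
      ∃ (x y : Fin d → ℝ) (T : A → Matrix (Fin d) (Fin d) ℝ),
        ∀ v : List A, p v = y ⬝ᵥ (wordProd T v) *ᵥ x := by
  constructor
  · intro hdim
    obtain ⟨ι, y, T, hrep⟩ := Submodule.exists_wordProd_repr_of_funLeft_cons_mem
      (fun a _ => funLeft_cons_mem_span_hankelCol p a) hdim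
    exact ⟨ι ⟨p, Submodule.subset_span ⟨[], hankelCol_nil p⟩⟩, y, T, hrep ⟨p, _⟩⟩
  · rintro ⟨x, y, T, hp⟩
    exact sfDim_le_of_wordProd_repr p hp

/-- `dim p ≤ d` iff `p` admits a linear representation
`p(a₁…aₙ) = yᵀ T_{aₙ} ⋯ T_{a₁} x` of size `d`. -/
theorem stmt1 {A : Type*} [Fintype A] [Nonempty A] (p : List A → ℝ) (d : ℕ) :
    sfDim p ≤ (d : Cardinal) ↔
      ∃ (x y : Fin d → ℝ) (T : A → Matrix (Fin d) (Fin d) ℝ),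
        ∀ v : List A, p v = y ⬝ᵥ (wordProd T v) *ᵥ x :=
  stmt1_general p d
end

section
/- Let p : Σ* → ℝ be a string function with dim p ≤ d. Then the following are equivalent: (i) p is a GUSSF, i.e., Σ_{a∈Σ} p(va) = p(v) for all v ∈ Σ*; (ii) there exist vectors x, y ∈ ℝ^d and matrices T_a ∈ ℝ^{d×d} for all a ∈ Σ such that p(v = a_1…a_n) = yᵀ T_{a_n}···T_{a_1} x for all v ∈ Σ*, and moreover yᵀ (Σ_{a∈Σ} T_a) = yᵀ. -/
open Matrix

/-!
The Hankel columns `p^w` span a space `V` of dimension at most `d` that is invariant under the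
left shifts `g ↦ (u ↦ g (a :: u))`, since the shift by `a` sends `p^w` to `p^{wa}`.
Retracting `V` onto `ℝ^d`, the shifts become matrices `T_a`, the column `p = p^□` becomes `x`,
and evaluation at `□` becomes `yᵀ`; the identity `∑_a g(a) = g(□)`, which spreads from the columns
to all of `V` by linearity, is exactly `yᵀ (∑_a T_a) = yᵀ`.
-/

theorem Submodule.exists_retraction_of_rank_le {K W : Type*} [Field K] [AddCommGroup W]
    [Module K W] (V : Submodule K W) {d : ℕ} (h : Module.rank K V ≤ d) :
    ∃ (ι : W →ₗ[K] Fin d → K) (π : (Fin d → K) →ₗ[K] W),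
      (∀ c, π c ∈ V) ∧ ∀ g ∈ V, π (ι g) = g := by
  obtain ⟨j, hj⟩ : ∃ j : V →ₗ[K] Fin d → K, Function.Injective j :=
    lift_rank_le_iff_exists_linearMap.mp (by simpa using h)
  obtain ⟨π, hπ⟩ := j.exists_leftInverse_of_injective (LinearMap.ker_eq_bot.mpr hj)
  obtain ⟨ι, hι⟩ := j.exists_extend
  refine ⟨ι, V.subtype ∘ₗ π, fun c => (π c).2, fun g hg => ?_⟩
  have hιg : ι g = j ⟨g, hg⟩ := congr($hι ⟨g, hg⟩)
  simp [hιg, ← LinearMap.comp_apply π j, hπ]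

lemma wordProd_append_singleton {A R : Type*} [Semiring R] {d : ℕ}
    (T : A → Matrix (Fin d) (Fin d) R) (v : List A) (a : A) :
    wordProd T (v ++ [a]) = T a * wordProd T v := by
  simp [wordProd, List.reverse_append]

theorem sum_append_singleton_of_linearRep {A R : Type*} [Fintype A] [CommSemiring R] {d : ℕ}
    {p : List A → R} {x y : Fin d → R} {T : A → Matrix (Fin d) (Fin d) R}
    (hrep : ∀ v, p v = y ⬝ᵥ wordProd T v *ᵥ x) (hy : y ᵥ* ∑ a, T a = y) (v : List A) :
    ∑ a, p (v ++ [a]) = p v := by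
  simp only [hrep, wordProd_append_singleton, ← mulVec_mulVec]
  rw [← dotProduct_sum, ← sum_mulVec, dotProduct_mulVec, hy]

namespace StringFunction

variable {A K : Type*} [Field K]

def shift (a : A) : (List A → K) →ₗ[K] List A → K :=
  LinearMap.funLeft K K (List.cons a)

@[simp]
lemma shift_apply (a : A) (g : List A → K) (u : List A) : shift a g u = g (a :: u) := rfl

section Representation

variable {d : ℕ} (ι : (List A → K) →ₗ[K] Fin d → K) (π : (Fin d → K) →ₗ[K] List A → K)

def shiftMatrix (a : A) : Matrix (Fin d) (Fin d) K :=
  LinearMap.toMatrix' (ι ∘ₗ shift a ∘ₗ π)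

def evalNilVec : Fin d → K :=
  (dotProductEquiv K (Fin d)).symm (LinearMap.proj [] ∘ₗ π)

lemma evalNilVec_dotProduct (c : Fin d → K) : evalNilVec π ⬝ᵥ c = π c [] :=
  congr($((dotProductEquiv K (Fin d)).apply_symm_apply (LinearMap.proj [] ∘ₗ π)) c)

variable {V : Submodule K (List A → K)}

lemma apply_shiftMatrix_mulVec (hV : ∀ a, ∀ g ∈ V, shift a g ∈ V) (hπV : ∀ c, π c ∈ V)
    (hπι : ∀ g ∈ V, π (ι g) = g) (a : A) (c : Fin d → K) :
    π (shiftMatrix ι π a *ᵥ c) = shift a (π c) := by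
  rw [shiftMatrix, LinearMap.toMatrix'_mulVec, LinearMap.comp_apply, LinearMap.comp_apply,
    hπι _ (hV a _ (hπV c))]

lemma apply_wordProd_shiftMatrix_mulVec (hV : ∀ a, ∀ g ∈ V, shift a g ∈ V)
    (hπV : ∀ c, π c ∈ V) (hπι : ∀ g ∈ V, π (ι g) = g) (v : List A) (c : Fin d → K) :
    π (wordProd (shiftMatrix ι π) v *ᵥ c) = fun u => π c (v ++ u) := by
  induction v using List.reverseRecOn with
  | nil => simp [wordProd]
  | append_singleton v a ih =>
    rw [wordProd_append_singleton, ← mulVec_mulVec, apply_shiftMatrix_mulVec ι π hV hπV hπι, ih]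
    ext u
    simp

theorem eq_evalNilVec_dotProduct_wordProd (hV : ∀ a, ∀ g ∈ V, shift a g ∈ V)
    (hπV : ∀ c, π c ∈ V) (hπι : ∀ g ∈ V, π (ι g) = g) {f : List A → K} (hf : f ∈ V)
    (v : List A) : f v = evalNilVec π ⬝ᵥ wordProd (shiftMatrix ι π) v *ᵥ ι f := by
  rw [evalNilVec_dotProduct, apply_wordProd_shiftMatrix_mulVec ι π hV hπV hπι, hπι f hf]
  exact congrArg f v.append_nil.symm

theorem evalNilVec_vecMul_sum_shiftMatrix [Fintype A] (hV : ∀ a, ∀ g ∈ V, shift a g ∈ V)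
    (hπV : ∀ c, π c ∈ V) (hπι : ∀ g ∈ V, π (ι g) = g) (hsum : ∀ g ∈ V, ∑ a, g [a] = g []) :
    evalNilVec π ᵥ* ∑ a, shiftMatrix ι π a = evalNilVec π := by
  refine dotProduct_eq _ _ fun c => ?_
  rw [← dotProduct_mulVec, sum_mulVec, dotProduct_sum]
  simp only [evalNilVec_dotProduct, apply_shiftMatrix_mulVec ι π hV hπV hπι, shift_apply]
  exact hsum _ (hπV c)

end Representation

variable (p : List A → ℝ)

lemma shift_hankelCol (a : A) (w : List A) :
    shift a (hankelCol p w) = hankelCol p (w ++ [a]) := by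
  ext u
  simp [hankelCol]

lemma shift_mem_span_hankelCol (a : A) {g : List A → ℝ}
    (hg : g ∈ Submodule.span ℝ (Set.range (hankelCol p))) :
    shift a g ∈ Submodule.span ℝ (Set.range (hankelCol p)) := by
  refine (Submodule.map_span_le _ _ _).mpr ?_ (Submodule.mem_map_of_mem hg)
  rintro _ ⟨w, rfl⟩
  rw [shift_hankelCol]
  exact Submodule.subset_span ⟨w ++ [a], rfl⟩

lemma sum_singleton_eq_nil_of_mem_span_hankelCol [Fintype A] (hp : ∀ v, ∑ a, p (v ++ [a]) = p v)
    {g : List A → ℝ} (hg : g ∈ Submodule.span ℝ (Set.range (hankelCol p))) :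
    ∑ a, g [a] = g [] := by
  induction hg using Submodule.span_induction with
  | mem g hg =>
    obtain ⟨w, rfl⟩ := hg
    simpa [hankelCol] using hp w
  | zero => simp
  | add g₁ g₂ _ _ ih₁ ih₂ => simp [Finset.sum_add_distrib, ih₁, ih₂]
  | smul c g _ ih => simp [← Finset.mul_sum, ih]

end StringFunction

theorem stmt2_general {A : Type*} [Fintype A] (p : List A → ℝ) (d : ℕ)
    (hdim : sfDim p ≤ (d : Cardinal)) :
    (∀ v : List A, ∑ a : A, p (v ++ [a]) = p v) ↔
      ∃ (x y : Fin d → ℝ) (T : A → Matrix (Fin d) (Fin d) ℝ),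
        (∀ v : List A, p v = y ⬝ᵥ (wordProd T v) *ᵥ x) ∧
        y ᵥ* (∑ a : A, T a) = y := by
  refine ⟨fun hp => ?_, fun ⟨x, y, T, hrep, hy⟩ => sum_append_singleton_of_linearRep hrep hy⟩
  open StringFunction in
  obtain ⟨ι, π, hπV, hπι⟩ := Submodule.exists_retraction_of_rank_le _ hdim
  have hV := shift_mem_span_hankelCol p
  exact ⟨ι p, evalNilVec π, shiftMatrix ι π,
    eq_evalNilVec_dotProduct_wordProd ι π hV hπV hπι (Submodule.subset_span ⟨[], rfl⟩),
    evalNilVec_vecMul_sum_shiftMatrix ι π hV hπV hπι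
      fun _ => sum_singleton_eq_nil_of_mem_span_hankelCol p hp⟩

/-- For `p` with `dim p ≤ d`: `p` is a GUSSF iff it admits a size-`d`
linear representation `p(a₁…aₙ) = yᵀ T_{aₙ} ⋯ T_{a₁} x` with `yᵀ (∑_a T_a) = yᵀ`. -/
theorem stmt2 {A : Type*} [Fintype A] [Nonempty A] (p : List A → ℝ) (d : ℕ)
    (hdim : sfDim p ≤ (d : Cardinal)) :
    (∀ v : List A, ∑ a : A, p (v ++ [a]) = p v) ↔
      ∃ (x y : Fin d → ℝ) (T : A → Matrix (Fin d) (Fin d) ℝ),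
        (∀ v : List A, p v = y ⬝ᵥ (wordProd T v) *ᵥ x) ∧
        y ᵥ* (∑ a : A, T a) = y :=
  stmt2_general p d hdim
end

section
/- Let d ≥ 1 and let p₁, p₂ : Σ* → ℝ be string functions with dim p₁ ≤ d and dim p₂ ≤ d. If p₁(v) = p₂(v) for every string v with |v| ≤ 2d−1, then p₁ = p₂. -/
theorem Submodule.exists_le_finrank_eq_succ_of_antitone {K V : Type*} [DivisionRing K]
    [AddCommGroup V] [Module K V] (W : Submodule K V) [FiniteDimensional K W]
    {f : ℕ → Submodule K V} (hf : Antitone f) (hfW : f 0 ≤ W) :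
    ∃ k ≤ Module.finrank K W, f k = f (k + 1) := by
  by_contra! hne
  have hfin (k : ℕ) : FiniteDimensional K (f k) :=
    Submodule.finiteDimensional_of_le ((hf k.zero_le).trans hfW)
  have hdrop : ∀ k ≤ Module.finrank K W + 1, Module.finrank K (f k) + k ≤ Module.finrank K W := by
    intro k hk
    induction k with
    | zero => simpa using Submodule.finrank_mono hfW
    | succ k ih =>
      have hlt : Module.finrank K (f (k + 1)) < Module.finrank K (f k) :=
        Submodule.finrank_lt_finrank_of_lt
          (lt_of_le_of_ne (hf k.le_succ) fun h => hne k (by omega) h.symm)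
      have := ih (by omega)
      omega
  have := hdrop _ le_rfl
  omega

section HankelSpan

variable {A : Type*}

def hankelSpan (p : List A → ℝ) : Submodule ℝ (List A → ℝ) :=
  Submodule.span ℝ (Set.range (hankelCol p))

theorem sfDim_eq_rank_hankelSpan (p : List A → ℝ) :
    sfDim p = Module.rank ℝ (hankelSpan p) :=
  rfl

theorem hankelCol_sub (p q : List A → ℝ) (w : List A) :
    hankelCol (p - q) w = hankelCol p w - hankelCol q w :=
  rfl

theorem hankelSpan_sub_le (p q : List A → ℝ) :
    hankelSpan (p - q) ≤ hankelSpan p ⊔ hankelSpan q := by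
  rw [hankelSpan, Submodule.span_le]
  rintro _ ⟨w, rfl⟩
  rw [hankelCol_sub]
  exact Submodule.sub_mem _ (Submodule.mem_sup_left (Submodule.subset_span ⟨w, rfl⟩))
    (Submodule.mem_sup_right (Submodule.subset_span ⟨w, rfl⟩))

theorem sfDim_sub_le (p q : List A → ℝ) : sfDim (p - q) ≤ sfDim p + sfDim q := by
  simp only [sfDim_eq_rank_hankelSpan]
  exact (Submodule.rank_mono (hankelSpan_sub_le p q)).trans
    (Submodule.rank_add_le_rank_add_rank _ _)

theorem cons_mem_hankelSpan {p f : List A → ℝ} (hf : f ∈ hankelSpan p) (a : A) :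
    (fun v => f (a :: v)) ∈ hankelSpan p := by
  induction hf using Submodule.span_induction with
  | mem _ hg =>
    obtain ⟨w, rfl⟩ := hg
    refine Submodule.subset_span ⟨w ++ [a], ?_⟩
    funext v
    simp [hankelCol]
  | zero => exact zero_mem _
  | add _ _ _ _ hg hh => exact add_mem hg hh
  | smul c _ _ hg => exact Submodule.smul_mem _ c hg

def vanishingBelow (A : Type*) (k : ℕ) : Submodule ℝ (List A → ℝ) where
  carrier := {f | ∀ v : List A, v.length < k → f v = 0}
  add_mem' hf hg v hv := by simp [hf v hv, hg v hv]
  zero_mem' _ _ := rfl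
  smul_mem' c _ hf v hv := by simp [hf v hv]

theorem vanishingBelow_antitone : Antitone (vanishingBelow A) :=
  fun _ _ hkm _ hf v hv => hf v (hv.trans_le hkm)

theorem hankelSpan_inf_vanishingBelow_succ_succ {p : List A → ℝ} {k : ℕ}
    (hk : hankelSpan p ⊓ vanishingBelow A k = hankelSpan p ⊓ vanishingBelow A (k + 1)) :
    hankelSpan p ⊓ vanishingBelow A (k + 1) = hankelSpan p ⊓ vanishingBelow A (k + 2) := by
  refine le_antisymm ?_ (inf_le_inf_left _ (vanishingBelow_antitone (by omega)))
  rintro f ⟨hfH, hfZ⟩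
  refine ⟨hfH, fun v hv => ?_⟩
  cases v with
  | nil => exact hfZ [] (by simp)
  | cons a v =>
    have hshift : (fun u => f (a :: u)) ∈ hankelSpan p ⊓ vanishingBelow A k :=
      ⟨cons_mem_hankelSpan hfH a, fun u hu => hfZ (a :: u) (by simp; omega)⟩
    rw [hk] at hshift
    exact hshift.2 v (by simpa using hv)

theorem hankelSpan_inf_vanishingBelow_eq_of_le {p : List A → ℝ} {k m : ℕ}
    (hk : hankelSpan p ⊓ vanishingBelow A k = hankelSpan p ⊓ vanishingBelow A (k + 1))
    (hkm : k ≤ m) :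
    hankelSpan p ⊓ vanishingBelow A m = hankelSpan p ⊓ vanishingBelow A k := by
  suffices ∀ m ≥ k, hankelSpan p ⊓ vanishingBelow A m = hankelSpan p ⊓ vanishingBelow A (m + 1)
      ∧ hankelSpan p ⊓ vanishingBelow A m = hankelSpan p ⊓ vanishingBelow A k from
    (this m hkm).2
  intro m hkm
  induction m, hkm using Nat.le_induction with
  | base => exact ⟨hk, rfl⟩
  | succ m _ ih => exact ⟨hankelSpan_inf_vanishingBelow_succ_succ ih.1, ih.1.symm.trans ih.2⟩

theorem eq_zero_of_sfDim_le_of_forall_length_lt {p : List A → ℝ} {n : ℕ}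
    (hdim : sfDim p ≤ n) (hvan : ∀ v : List A, v.length < n → p v = 0) : p = 0 := by
  rw [sfDim_eq_rank_hankelSpan] at hdim
  have : FiniteDimensional ℝ (hankelSpan p) :=
    Module.rank_lt_aleph0_iff.mp (hdim.trans_lt (Cardinal.natCast_lt_aleph0))
  obtain ⟨k, hk, hstab⟩ := (hankelSpan p).exists_le_finrank_eq_succ_of_antitone
    (fun _ _ hkm => inf_le_inf_left _ (vanishingBelow_antitone hkm)) inf_le_left
  have hkn : k ≤ n := hk.trans (Module.finrank_le_of_rank_le hdim)
  have hp : p ∈ hankelSpan p ⊓ vanishingBelow A n :=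
    ⟨Submodule.subset_span ⟨[], rfl⟩, hvan⟩
  funext v
  have hm : p ∈ hankelSpan p ⊓ vanishingBelow A (max n (v.length + 1)) := by
    rwa [hankelSpan_inf_vanishingBelow_eq_of_le hstab (hkn.trans (le_max_left _ _)),
      ← hankelSpan_inf_vanishingBelow_eq_of_le hstab hkn]
  exact hm.2 v (by omega)

end HankelSpan

theorem stmt4_general {A : Type*} (d : ℕ)
    (p₁ p₂ : List A → ℝ)
    (h₁ : sfDim p₁ ≤ (d : Cardinal)) (h₂ : sfDim p₂ ≤ (d : Cardinal))
    (h : ∀ v : List A, v.length ≤ 2 * d - 1 → p₁ v = p₂ v) :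
    p₁ = p₂ := by
  have hdim : sfDim (p₁ - p₂) ≤ ((2 * d : ℕ) : Cardinal) := by
    calc sfDim (p₁ - p₂) ≤ sfDim p₁ + sfDim p₂ := sfDim_sub_le p₁ p₂
      _ ≤ d + d := add_le_add h₁ h₂
      _ = ((2 * d : ℕ) : Cardinal) := by push_cast; ring
  refine sub_eq_zero.mp (eq_zero_of_sfDim_le_of_forall_length_lt hdim fun v hv => ?_)
  exact sub_eq_zero.mpr (h v (by omega))

/-- Two string functions of dimension `≤ d` (`d ≥ 1`) that agree on all
strings of length `≤ 2d−1` are equal. -/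
theorem stmt4 {A : Type*} [Fintype A] [Nonempty A] (d : ℕ) (hd : 1 ≤ d)
    (p₁ p₂ : List A → ℝ)
    (h₁ : sfDim p₁ ≤ (d : Cardinal)) (h₂ : sfDim p₂ ≤ (d : Cardinal))
    (h : ∀ v : List A, v.length ≤ 2 * d - 1 → p₁ v = p₂ v) :
    p₁ = p₂ :=
  stmt4_general d p₁ p₂ h₁ h₂ h
end

section
/- Let p : Σ* → ℝ be a string function with dim p = d < ∞. Suppose v_1,…,v_d, w_1,…,w_d ∈ Σ* are such that the rows p_{v_i} : w ↦ p(wv_i) span the row space of the Hankel matrix 𝒫_p and the columns p^{w_j} : v ↦ p(w_j v) span the column space of 𝒫_p, and that V := [p(w_j v_i)]_{1≤i,j≤d} ∈ ℝ^{d×d} is invertible. Define x := (p(v_1),…,p(v_d))ᵀ, let y ∈ ℝ^d be such that Σ_{i=1}^d y_i p(w_j v_i) = p(w_j) for all 1 ≤ j ≤ d, and set W_a := [p(w_j a v_i)]_{1≤i,j≤d} and T_a := W_a V^{−1} for each a ∈ Σ. Then p(v = a_1…a_n) = yᵀ T_{a_n}···T_{a_1} x for all v ∈ Σ*. -/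
open Matrix

/-- The row `p_v` of the Hankel matrix of `p`, as a function `w ↦ p(wv)`. -/
def hankelRow {A : Type*} (p : List A → ℝ) (v : List A) : List A → ℝ :=
  fun w => p (w ++ v)

/-!
Since the rows `p_{vᵢ}` span the row space, every row `p_v` is a combination
`∑ᵢ cᵢ(v) p_{vᵢ}`, and evaluating at the `wⱼ` shows `c(v) V = (p(wⱼ v))ⱼ`, so `c(v)` is
determined by `V`. Evaluating the expansion of `p_v` at `wⱼ a` gives
`c(av) = c(v) W_a V⁻¹ = c(v) T_a`, and `c(□) = y`; hence `c(a₁…aₙ) = yᵀ T_{aₙ} ⋯ T_{a₁}`,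
and evaluating at `□` gives the claim.
-/

namespace HankelLearning

variable {A : Type*} (p : List A → ℝ) {d : ℕ} (ws vs : Fin d → List A)

def hankelBlock : Matrix (Fin d) (Fin d) ℝ :=
  Matrix.of fun i j => p (ws j ++ vs i)

/-- The coordinates of the row `p_v` with respect to the rows `p_{vᵢ}`. -/
noncomputable def hankelCoords (v : List A) : Fin d → ℝ :=
  (fun j => p (ws j ++ v)) ᵥ* (hankelBlock p ws vs)⁻¹

variable {p ws vs}

theorem eq_hankelCoords_of_sum_eq (hV : IsUnit (hankelBlock p ws vs).det) {v : List A}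
    {c : Fin d → ℝ} (hc : ∀ j, ∑ i, c i * p (ws j ++ vs i) = p (ws j ++ v)) :
    c = hankelCoords p ws vs v := by
  have hcV : c ᵥ* hankelBlock p ws vs = fun j => p (ws j ++ v) := funext hc
  rw [hankelCoords, ← hcV, vecMul_vecMul, mul_nonsing_inv _ hV, vecMul_one]

theorem exists_sum_eq_of_hankelRow_mem_span {v : List A}
    (hv : hankelRow p v ∈ Submodule.span ℝ (Set.range fun i => hankelRow p (vs i))) :
    ∃ c : Fin d → ℝ, ∀ w, ∑ i, c i * p (w ++ vs i) = p (w ++ v) := by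
  obtain ⟨c, hc⟩ := (Submodule.mem_span_range_iff_exists_fun ℝ).mp hv
  exact ⟨c, fun w => by simpa [hankelRow, Finset.sum_apply] using congrFun hc w⟩

theorem sum_hankelCoords_mul
    (hrow : ∀ v, hankelRow p v ∈ Submodule.span ℝ (Set.range fun i => hankelRow p (vs i)))
    (hV : IsUnit (hankelBlock p ws vs).det) (v w : List A) :
    ∑ i, hankelCoords p ws vs v i * p (w ++ vs i) = p (w ++ v) := by
  obtain ⟨c, hc⟩ := exists_sum_eq_of_hankelRow_mem_span (hrow v)
  rw [← eq_hankelCoords_of_sum_eq hV fun j => hc (ws j)]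
  exact hc w

theorem wordProd_cons {R : Type*} [Semiring R] (T : A → Matrix (Fin d) (Fin d) R)
    (a : A) (v : List A) : wordProd T (a :: v) = wordProd T v * T a := by
  simp [wordProd]

theorem vecMul_wordProd
    (hrow : ∀ v, hankelRow p v ∈ Submodule.span ℝ (Set.range fun i => hankelRow p (vs i)))
    (hV : IsUnit (hankelBlock p ws vs).det) {y : Fin d → ℝ}
    (hy : ∀ j, ∑ i, y i * p (ws j ++ vs i) = p (ws j)) {T : A → Matrix (Fin d) (Fin d) ℝ}
    (hT : ∀ a, T a = hankelBlock p (fun j => ws j ++ [a]) vs * (hankelBlock p ws vs)⁻¹)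
    (v : List A) : y ᵥ* wordProd T v = hankelCoords p ws vs v := by
  induction v with
  | nil =>
    simpa [wordProd] using
      eq_hankelCoords_of_sum_eq hV (v := []) (by simpa using hy)
  | cons a v ih =>
    have hshift : hankelCoords p ws vs v ᵥ* hankelBlock p (fun j => ws j ++ [a]) vs =
        fun j => p (ws j ++ a :: v) :=
      funext fun j => by
        simpa [hankelBlock, vecMul, dotProduct] using
          sum_hankelCoords_mul hrow hV v (ws j ++ [a])
    rw [wordProd_cons, ← vecMul_vecMul, ih, hT, ← vecMul_vecMul, hshift, hankelCoords]

end HankelLearning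

open HankelLearning in
theorem stmt6_general {A : Type*} (p : List A → ℝ) (d : ℕ)
    (vs ws : Fin d → List A)
    (hrow : Submodule.span ℝ (Set.range fun i : Fin d => hankelRow p (vs i)) =
            Submodule.span ℝ (Set.range (hankelRow p)))
    (V : Matrix (Fin d) (Fin d) ℝ) (hV : V = Matrix.of fun i j => p (ws j ++ vs i))
    (hVunit : IsUnit V.det)
    (x : Fin d → ℝ) (hx : x = fun i => p (vs i))
    (y : Fin d → ℝ) (hy : ∀ j : Fin d, ∑ i : Fin d, y i * p (ws j ++ vs i) = p (ws j))
    (W : A → Matrix (Fin d) (Fin d) ℝ)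
    (hW : ∀ a : A, W a = Matrix.of fun i j => p (ws j ++ [a] ++ vs i))
    (T : A → Matrix (Fin d) (Fin d) ℝ) (hT : ∀ a : A, T a = W a * V⁻¹) :
    ∀ v : List A, p v = y ⬝ᵥ (wordProd T v) *ᵥ x := by
  subst hV hx
  obtain rfl : W = fun a => hankelBlock p (fun j => ws j ++ [a]) vs := funext hW
  have hrow' : ∀ v, hankelRow p v ∈ Submodule.span ℝ (Set.range fun i => hankelRow p (vs i)) :=
    fun v => hrow ▸ Submodule.subset_span ⟨v, rfl⟩
  intro v
  rw [dotProduct_mulVec, vecMul_wordProd hrow' hVunit hy hT]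
  simpa [dotProduct] using (sum_hankelCoords_mul hrow' hVunit v []).symm

/-- Correctness of the learning algorithm: if rows `p_{vᵢ}` span the row
space, columns `p^{wⱼ}` span the column space, `V = [p(wⱼvᵢ)]` is invertible,
`x = (p(v₁),…,p(v_d))ᵀ`, `y` satisfies `∑ᵢ yᵢ p(wⱼvᵢ) = p(wⱼ)`, `W_a = [p(wⱼavᵢ)]`, and
`T_a = W_a V⁻¹`, then `p(a₁…aₙ) = yᵀ T_{aₙ} ⋯ T_{a₁} x` for all strings. -/
theorem stmt6 {A : Type*} [Fintype A] [Nonempty A] (p : List A → ℝ) (d : ℕ)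
    (hdim : sfDim p = (d : Cardinal))
    (vs ws : Fin d → List A)
    (hrow : Submodule.span ℝ (Set.range fun i : Fin d => hankelRow p (vs i)) =
            Submodule.span ℝ (Set.range (hankelRow p)))
    (hcol : Submodule.span ℝ (Set.range fun j : Fin d => hankelCol p (ws j)) =
            Submodule.span ℝ (Set.range (hankelCol p)))
    (V : Matrix (Fin d) (Fin d) ℝ) (hV : V = Matrix.of fun i j => p (ws j ++ vs i))
    (hVunit : IsUnit V.det)
    (x : Fin d → ℝ) (hx : x = fun i => p (vs i))
    (y : Fin d → ℝ) (hy : ∀ j : Fin d, ∑ i : Fin d, y i * p (ws j ++ vs i) = p (ws j))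
    (W : A → Matrix (Fin d) (Fin d) ℝ)
    (hW : ∀ a : A, W a = Matrix.of fun i j => p (ws j ++ [a] ++ vs i))
    (T : A → Matrix (Fin d) (Fin d) ℝ) (hT : ∀ a : A, T a = W a * V⁻¹) :
    ∀ v : List A, p v = y ⬝ᵥ (wordProd T v) *ᵥ x :=
  stmt6_general p d vs ws hrow V hV hVunit x hx y hy W hW T hT
end

section
/- Let Σ be a finite alphabet with l := |Σ|, let n ≥ 2l−1, and let (p(v))_{v∈Σ^n} be a family of nonnegative reals; extend p to all strings u with |u| < n by p(u) := Σ_{w∈Σ^{n−|u|}} p(uw). Then there exist π ∈ ℂ^Σ and M ∈ ℂ^{Σ×Σ} with Σ_{b∈Σ} M_{ab} = 1 for each a ∈ Σ such that p(a_1…a_n) = π(a_1) ∏_{i=2}^n M_{a_{i−1}a_i} for all a_1…a_n ∈ Σ^n, if and only if det [[p(vau), p(wau)], [p(vau'), p(wau')]] = p(vau)p(wau') − p(wau)p(vau') = 0 for all choices of u, u', v, w ∈ Σ* and a ∈ Σ with |vau|, |vau'|, |wau|, |wau'| ≤ n. -/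
/-!
Call `p` Markov with transition matrix `M` when
`p (v ++ a :: u) = p (v ++ [a]) · M_{a u₁} M_{u₁ u₂} ⋯` for all strings of length at most `n`.
Marginalizing the Markov parametrization over the last letters (the rows of `M` sum to `1`)
shows that it is Markov, and then every minor `p(vau) p(wau') - p(wau) p(vau')` vanishes, both
products being `p(va) p(wa)` times the same path weights. Conversely, the minors with `u = b`,
`u' = □` say that `p(vab) / p(va)` does not depend on `v`; these ratios are the rows of the
transition matrix, with `π a = p(a)`. A prefix `va` of mass zero imposes nothing, since by
nonnegativity all its extensions have mass zero too, and a letter `a` that only ever follows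
such prefixes gets an arbitrary stochastic row.
-/

/-- The weight `∏_{i=2}^n M_{a_{i−1} a_i}` of the path `a :: t` through the transition
matrix `M`, starting at `a`. -/
def markovWeight {A R : Type*} [Mul R] [One R] (M : Matrix A A R) : A → List A → R
  | _, [] => 1
  | a, b :: t => M a b * markovWeight M b t

section MarkovChain

variable {A R : Type*}

theorem markovWeight_append_cons [Monoid R] (M : Matrix A A R) (a c : A) (t₁ t₂ : List A) :
    markovWeight M a (t₁ ++ c :: t₂) =
      markovWeight M a (t₁ ++ [c]) * markovWeight M c t₂ := by
  induction t₁ generalizing a with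
  | nil => simp [markovWeight]
  | cons d t₁ ih => simp only [List.cons_append, markovWeight, ih, mul_assoc]

theorem sum_markovWeight_append_singleton [Fintype A] [Semiring R] {M : Matrix A A R}
    (hM : ∀ a, ∑ b, M a b = 1) (a : A) (t : List A) :
    ∑ b, markovWeight M a (t ++ [b]) = markovWeight M a t := by
  induction t generalizing a with
  | nil => simpa [markovWeight] using hM a
  | cons c t ih => simp only [List.cons_append, markovWeight, ← Finset.mul_sum, ih]

theorem markovWeight_map {S F : Type*} [Monoid R] [Monoid S] [FunLike F R S]
    [MonoidHomClass F R S] (f : F) (M : Matrix A A R) (a : A) (t : List A) :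
    markovWeight (M.map f) a t = f (markovWeight M a t) := by
  induction t generalizing a with
  | nil => simp [markovWeight]
  | cons c t ih => simp [markovWeight, ih]

def IsMarginalFamily [Fintype A] [AddCommMonoid R] (n : ℕ) (p : List A → R) : Prop :=
  ∀ u : List A, u.length < n → p u = ∑ b, p (u ++ [b])

def IsMarkovWith [Mul R] [One R] (M : Matrix A A R) (n : ℕ) (p : List A → R) : Prop :=
  ∀ (v : List A) (a : A) (u : List A), (v ++ a :: u).length ≤ n →
    p (v ++ a :: u) = p (v ++ [a]) * markovWeight M a u

theorem isMarginalFamily_of_eq_sum_ofFn [Fintype A] [AddCommMonoid R] {n : ℕ} {p : List A → R}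
    (hext : ∀ u : List A, u.length < n →
      p u = ∑ f : Fin (n - u.length) → A, p (u ++ List.ofFn f)) :
    IsMarginalFamily n p := by
  intro u hu
  obtain ⟨m, hm⟩ : ∃ m, n - u.length = m + 1 := ⟨n - u.length - 1, by omega⟩
  rw [hext u hu, hm, ← (Fin.consEquiv fun _ : Fin (m + 1) => A).sum_comp, Fintype.sum_prod_type]
  refine Finset.sum_congr rfl fun b _ => ?_
  rcases (show (u ++ [b]).length ≤ n by simp; omega).lt_or_eq with hlt | heq
  · have hmb : n - (u ++ [b]).length = m := by simp; omega
    rw [hext _ hlt, hmb]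
    simp [Fin.consEquiv, List.ofFn_succ]
  · have hm0 : m = 0 := by simp at heq; omega
    subst hm0
    simp [Fin.consEquiv]

theorem nonneg_of_eq_sum_ofFn [Fintype A] [AddCommMonoid R] [PartialOrder R]
    [IsOrderedAddMonoid R] {n : ℕ} {p : List A → R}
    (hnonneg : ∀ v : List A, v.length = n → 0 ≤ p v)
    (hext : ∀ u : List A, u.length < n →
      p u = ∑ f : Fin (n - u.length) → A, p (u ++ List.ofFn f))
    {u : List A} (hu : u.length ≤ n) : 0 ≤ p u := by
  rcases hu.lt_or_eq with hlt | heq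
  · rw [hext u hlt]
    exact Finset.sum_nonneg fun f _ => hnonneg _ (by simp; omega)
  · exact hnonneg u heq

namespace IsMarkovWith

variable {n : ℕ} {p : List A → R}

theorem map {S F : Type*} [Monoid R] [Monoid S] [FunLike F R S] [MonoidHomClass F R S]
    {M : Matrix A A R} (h : IsMarkovWith M n p) (f : F) :
    IsMarkovWith (M.map f) n fun u => f (p u) := fun v a u hlen => by
  dsimp only
  rw [h v a u hlen, map_mul, markovWeight_map]

theorem cross_mul_eq [CommSemiring R] {M : Matrix A A R} (h : IsMarkovWith M n p)
    {u u' v w : List A} {a : A}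
    (h₁ : (v ++ a :: u).length ≤ n) (h₂ : (v ++ a :: u').length ≤ n)
    (h₃ : (w ++ a :: u).length ≤ n) (h₄ : (w ++ a :: u').length ≤ n) :
    p (v ++ a :: u) * p (w ++ a :: u') = p (w ++ a :: u) * p (v ++ a :: u') := by
  rw [h v a u h₁, h w a u' h₄, h w a u h₃, h v a u' h₂]
  ring

end IsMarkovWith

theorem isMarkovWith_of_forall_append_pair [Monoid R] {M : Matrix A A R} {n : ℕ}
    {p : List A → R}
    (hM : ∀ (v : List A) (a b : A), (v ++ [a, b]).length ≤ n →
      p (v ++ [a, b]) = p (v ++ [a]) * M a b) :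
    IsMarkovWith M n p := by
  intro v a u h
  induction u generalizing v a with
  | nil => rw [markovWeight, mul_one]
  | cons c u ih =>
    have hv : v ++ a :: c :: u = (v ++ [a]) ++ c :: u := by simp
    rw [hv] at h ⊢
    rw [ih (v ++ [a]) c h, List.append_assoc, List.singleton_append,
      hM v a c (by simp at h ⊢; omega), markovWeight, mul_assoc]

namespace IsMarginalFamily

variable [Fintype A] {n : ℕ}

theorem map {S F : Type*} [AddCommMonoid R] [AddCommMonoid S] [FunLike F R S]
    [AddMonoidHomClass F R S] {p : List A → R} (hp : IsMarginalFamily n p) (f : F) :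
    IsMarginalFamily n fun u => f (p u) := fun u hu => by
  dsimp only
  rw [hp u hu, map_sum]

theorem eq_mul_markovWeight_of_length_le [CommSemiring R] {p : List A → R}
    (hp : IsMarginalFamily n p) {M : Matrix A A R} (hM : ∀ a, ∑ b, M a b = 1) {π : A → R}
    (hπ : ∀ (a : A) (t : List A), (a :: t).length = n →
      p (a :: t) = π a * markovWeight M a t)
    {a : A} {t : List A} (ht : (a :: t).length ≤ n) : p (a :: t) = π a * markovWeight M a t := by
  induction h : n - (a :: t).length generalizing t with
  | zero => exact hπ a t (by omega)
  | succ k ih =>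
    calc p (a :: t) = ∑ b, p (a :: (t ++ [b])) := hp (a :: t) (by omega)
      _ = ∑ b, π a * markovWeight M a (t ++ [b]) :=
        Finset.sum_congr rfl fun b _ => ih (by simp at ht h ⊢; omega) (by simp at h ⊢; omega)
      _ = π a * markovWeight M a t := by
        rw [← Finset.mul_sum, sum_markovWeight_append_singleton hM]

theorem isMarkovWith [CommSemiring R] {p : List A → R} (hp : IsMarginalFamily n p)
    {M : Matrix A A R} (hM : ∀ a, ∑ b, M a b = 1) {π : A → R}
    (hπ : ∀ (a : A) (t : List A), (a :: t).length = n →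
      p (a :: t) = π a * markovWeight M a t) :
    IsMarkovWith M n p := by
  intro v a u h
  have hfactor : ∀ (a : A) (t : List A), (a :: t).length ≤ n →
      p (a :: t) = π a * markovWeight M a t := fun _ _ =>
    hp.eq_mul_markovWeight_of_length_le hM hπ
  cases v with
  | nil =>
    simp only [List.nil_append] at h ⊢
    rw [hfactor a u h, hfactor a [] (by simp at h ⊢; omega), markovWeight, mul_one]
  | cons c v =>
    simp only [List.cons_append] at h ⊢
    rw [hfactor c _ h, hfactor c (v ++ [a]) (by simp at h ⊢; omega), markovWeight_append_cons,
      mul_assoc]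

theorem append_singleton_eq_zero [AddCommMonoid R] [PartialOrder R] [IsOrderedAddMonoid R]
    {p : List A → R} (hp : IsMarginalFamily n p)
    (hnonneg : ∀ v : List A, v.length ≤ n → 0 ≤ p v) {s : List A} (hs : s.length < n)
    (h0 : p s = 0) (b : A) : p (s ++ [b]) = 0 := by
  have hsum := hp s hs
  rw [h0, eq_comm, Finset.sum_eq_zero_iff_of_nonneg fun c _ => hnonneg _ (by simp; omega)]
    at hsum
  exact hsum b (Finset.mem_univ b)

theorem exists_transition_row {𝕜 : Type*} [Field 𝕜] {p : List A → 𝕜}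
    (hp : IsMarginalFamily n p)
    (hdet : ∀ (v w : List A) (a b : A), (v ++ [a, b]).length ≤ n → (w ++ [a, b]).length ≤ n →
      p (v ++ [a, b]) * p (w ++ [a]) = p (w ++ [a, b]) * p (v ++ [a]))
    (a : A) :
    ∃ r : A → 𝕜, ∑ b, r b = 1 ∧ ∀ (v : List A) (b : A), (v ++ [a, b]).length ≤ n →
      p (v ++ [a]) ≠ 0 → p (v ++ [a, b]) = p (v ++ [a]) * r b := by
  classical
  by_cases h : ∃ v₀ : List A, v₀.length + 2 ≤ n ∧ p (v₀ ++ [a]) ≠ 0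
  · obtain ⟨v₀, hv₀, hp₀⟩ := h
    refine ⟨fun b => p (v₀ ++ [a, b]) / p (v₀ ++ [a]), ?_, fun v b hv _ => ?_⟩
    · have hsum : ∑ b, p (v₀ ++ [a, b]) = p (v₀ ++ [a]) := by
        simpa using (hp (v₀ ++ [a]) (by simp; omega)).symm
      rw [← Finset.sum_div, hsum, div_self hp₀]
    · rw [mul_div_assoc', eq_div_iff hp₀]
      exact (hdet v v₀ a b hv (by simp; omega)).trans (mul_comm _ _)
  · push Not at h
    refine ⟨Pi.single a 1, by simp, fun v b hv hva => absurd (h v (by simp at hv; omega)) hva⟩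

theorem exists_isMarkovWith {𝕜 : Type*} [Field 𝕜] [LinearOrder 𝕜] [IsStrictOrderedRing 𝕜]
    {p : List A → 𝕜} (hp : IsMarginalFamily n p)
    (hnonneg : ∀ v : List A, v.length ≤ n → 0 ≤ p v)
    (hdet : ∀ (v w : List A) (a b : A), (v ++ [a, b]).length ≤ n → (w ++ [a, b]).length ≤ n →
      p (v ++ [a, b]) * p (w ++ [a]) = p (w ++ [a, b]) * p (v ++ [a])) :
    ∃ M : Matrix A A 𝕜, (∀ a, ∑ b, M a b = 1) ∧ IsMarkovWith M n p := by
  choose M hM hfactor using hp.exists_transition_row hdet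
  refine ⟨M, hM, isMarkovWith_of_forall_append_pair fun v a b hv => ?_⟩
  by_cases hva : p (v ++ [a]) = 0
  · rw [hva, zero_mul]
    simpa using hp.append_singleton_eq_zero hnonneg (by simp at hv ⊢; omega) hva b
  · exact hfactor a v b hv hva

end IsMarginalFamily

end MarkovChain

theorem stmt15_general {A : Type*} [Fintype A] (n : ℕ)
    (p : List A → ℝ)
    (hnonneg : ∀ v : List A, v.length = n → 0 ≤ p v)
    (hext : ∀ u : List A, u.length < n →
      p u = ∑ f : Fin (n - u.length) → A, p (u ++ List.ofFn f)) :
    (∃ (π : A → ℂ) (M : Matrix A A ℂ),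
        (∀ a, ∑ b : A, M a b = 1) ∧
        ∀ (a : A) (t : List A), (a :: t).length = n →
          (p (a :: t) : ℂ) = π a * markovWeight M a t) ↔
      (∀ (u u' v w : List A) (a : A),
        (v ++ a :: u).length ≤ n → (v ++ a :: u').length ≤ n →
        (w ++ a :: u).length ≤ n → (w ++ a :: u').length ≤ n →
        p (v ++ a :: u) * p (w ++ a :: u') - p (w ++ a :: u) * p (v ++ a :: u') = 0) := by
  have hp := isMarginalFamily_of_eq_sum_ofFn hext
  constructor
  · rintro ⟨π, M, hM, hπ⟩ u u' v w a h₁ h₂ h₃ h₄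
    have hmarkov : IsMarkovWith M n fun u => (p u : ℂ) :=
      (hp.map Complex.ofRealHom).isMarkovWith hM hπ
    exact sub_eq_zero.mpr (by exact_mod_cast hmarkov.cross_mul_eq h₁ h₂ h₃ h₄)
  · intro hdet
    obtain ⟨M, hM, hmarkov⟩ :=
      hp.exists_isMarkovWith (fun _ => nonneg_of_eq_sum_ofFn hnonneg hext) fun v w a b hv hw =>
        sub_eq_zero.mp
          (hdet [b] [] v w a hv (by simp at hv ⊢; omega) hw (by simp at hw ⊢; omega))
    refine ⟨fun a => p [a], M.map Complex.ofRealHom, fun a => ?_, fun a t ht => ?_⟩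
    · simpa using congrArg Complex.ofReal (hM a)
    · simpa using hmarkov.map Complex.ofRealHom [] a t ht.le

/-- Let `l = |Σ|`, `n ≥ 2l−1`, and let `(p(v))_{v ∈ Σⁿ}` be nonnegative,
extended to shorter strings by `p(u) = ∑_{w ∈ Σ^{n−|u|}} p(uw)`. Then `(p(v))_{v ∈ Σⁿ}`
lies in the image of the (complex) Markov model — i.e. there are `π ∈ ℂ^Σ` and
`M ∈ ℂ^{Σ×Σ}` with row sums `1` such that `p(a₁…aₙ) = π(a₁) ∏_{i=2}^n M_{a_{i−1}a_i}` on
`Σⁿ` — iff `p(vau)·p(wau') − p(wau)·p(vau') = 0` for all `u,u',v,w ∈ Σ*`, `a ∈ Σ` with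
`|vau|, |vau'|, |wau|, |wau'| ≤ n`. -/
theorem stmt15 {A : Type*} [Fintype A] [Nonempty A] (n : ℕ)
    (hn : 2 * Fintype.card A - 1 ≤ n)
    (p : List A → ℝ)
    (hnonneg : ∀ v : List A, v.length = n → 0 ≤ p v)
    (hext : ∀ u : List A, u.length < n →
      p u = ∑ f : Fin (n - u.length) → A, p (u ++ List.ofFn f)) :
    (∃ (π : A → ℂ) (M : Matrix A A ℂ),
        (∀ a, ∑ b : A, M a b = 1) ∧
        ∀ (a : A) (t : List A), (a :: t).length = n →
          (p (a :: t) : ℂ) = π a * markovWeight M a t) ↔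
      (∀ (u u' v w : List A) (a : A),
        (v ++ a :: u).length ≤ n → (v ++ a :: u').length ≤ n →
        (w ++ a :: u).length ≤ n → (w ++ a :: u').length ≤ n →
        p (v ++ a :: u) * p (w ++ a :: u') - p (w ++ a :: u) * p (v ++ a :: u') = 0) :=
  stmt15_general n p hnonneg hext
end
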